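/- Let ψ ∈ H_A ⊗ H_B be a unit vector, A₀,A₁ self-adjoint involutions on H_A and B₀,B₁ on H_B, and suppose ⟨ψ| A₀⊗B₀ |ψ⟩ = 0. Then |⟨ψ| A₀⊗B₀ + A₀⊗B₁ + A₁⊗B₀ − A₁⊗B₁ |ψ⟩| ≤ 3√3/2. -/

import Mathlib

/-!
With `X = √3 A₀ - B₀ - 2 B₁` and `Y = √3 A₁ - B₀ + B₁`, the relations `A_i² = B_j² = 1` and
`[A_i, B_j] = 0` give the sum-of-squares decomposition of the CHSH operator `𝓑`
`4√3 𝓑 = 18 + 2√3 A₀B₀ - X² - 2Y²`. For self-adjoint `X`, `Y` the squares have nonnegative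
expectation, so `⟨ψ, 𝓑 ψ⟩ ≤ 18 / (4√3) = 3√3/2` as soon as `⟨ψ, A₀B₀ ψ⟩ = 0`. Replacing
`A_i` by `-A_i` keeps all hypotheses and negates `𝓑`, which gives the lower bound; `𝓑` is
self-adjoint, so its expectation is real.
-/

open scoped InnerProductSpace

open RCLike ContinuousLinearMap

def chsh {R : Type*} [Ring R] (a₀ a₁ b₀ b₁ : R) : R :=
  a₀ * b₀ + a₀ * b₁ + a₁ * b₀ - a₁ * b₁

section Algebra

variable {R : Type*} [Ring R] {a₀ a₁ b₀ b₁ : R}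

theorem chsh_neg_left (a₀ a₁ b₀ b₁ : R) : chsh (-a₀) (-a₁) b₀ b₁ = -chsh a₀ a₁ b₀ b₁ := by
  simp only [chsh, neg_mul]
  abel

theorem IsSelfAdjoint.chsh [StarRing R] (ha₀ : IsSelfAdjoint a₀) (ha₁ : IsSelfAdjoint a₁)
    (hb₀ : IsSelfAdjoint b₀) (hb₁ : IsSelfAdjoint b₁) (h₀₀ : Commute a₀ b₀)
    (h₀₁ : Commute a₀ b₁) (h₁₀ : Commute a₁ b₀) (h₁₁ : Commute a₁ b₁) :
    IsSelfAdjoint (chsh a₀ a₁ b₀ b₁) :=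
  ((((ha₀.commute_iff hb₀).1 h₀₀).add ((ha₀.commute_iff hb₁).1 h₀₁)).add
    ((ha₁.commute_iff hb₀).1 h₁₀)).sub ((ha₁.commute_iff hb₁).1 h₁₁)

theorem smul_chsh_eq_sum_sq {k : Type*} [CommRing k] [Algebra k R]
    (ha₀ : a₀ * a₀ = 1) (ha₁ : a₁ * a₁ = 1) (hb₀ : b₀ * b₀ = 1) (hb₁ : b₁ * b₁ = 1)
    (h₀₀ : Commute a₀ b₀) (h₀₁ : Commute a₀ b₁) (h₁₀ : Commute a₁ b₀) (h₁₁ : Commute a₁ b₁)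
    {c : k} (hc : c * c = 3) :
    (4 * c) • chsh a₀ a₁ b₀ b₁ = (18 : k) • 1 + (2 * c) • (a₀ * b₀)
      - (c • a₀ - b₀ - 2 • b₁) * (c • a₀ - b₀ - 2 • b₁)
      - (2 : k) • ((c • a₁ - b₀ + b₁) * (c • a₁ - b₀ + b₁)) := by
  simp only [chsh, mul_add, add_mul, mul_sub, sub_mul, smul_mul_assoc, mul_smul_comm, smul_smul,
    smul_add, smul_sub, ha₀, ha₁, hb₀, hb₁, ← h₀₀.eq, ← h₀₁.eq, ← h₁₀.eq, ← h₁₁.eq, hc]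
  match_scalars <;> ring

end Algebra

section Operator

variable {𝕜 E : Type*} [RCLike 𝕜] [NormedAddCommGroup E] [InnerProductSpace 𝕜 E]
  [CompleteSpace E]

theorem IsSelfAdjoint.re_inner_mul_self_apply {T : E →L[𝕜] E} (hT : IsSelfAdjoint T) (x : E) :
    re ⟪x, (T * T) x⟫_𝕜 = ‖T x‖ ^ 2 := by
  rw [mul_def, comp_apply, ← hT.isSymmetric.apply_clm x (T x), inner_self_eq_norm_sq]

theorem re_inner_chsh_le {A₀ A₁ B₀ B₁ : E →L[𝕜] E}
    (hA₀ : IsSelfAdjoint A₀) (hA₁ : IsSelfAdjoint A₁)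
    (hB₀ : IsSelfAdjoint B₀) (hB₁ : IsSelfAdjoint B₁)
    (hA₀sq : A₀ * A₀ = 1) (hA₁sq : A₁ * A₁ = 1) (hB₀sq : B₀ * B₀ = 1) (hB₁sq : B₁ * B₁ = 1)
    (h₀₀ : Commute A₀ B₀) (h₀₁ : Commute A₀ B₁) (h₁₀ : Commute A₁ B₀) (h₁₁ : Commute A₁ B₁)
    {ψ : E} (hψ : ‖ψ‖ = 1) (hcorr : re ⟪ψ, (A₀ * B₀) ψ⟫_𝕜 = 0) :
    re ⟪ψ, chsh A₀ A₁ B₀ B₁ ψ⟫_𝕜 ≤ 3 * √3 / 2 := by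
  have h3 : √3 * √3 = 3 := Real.mul_self_sqrt (by norm_num)
  have hc : ((√3 : ℝ) : 𝕜) * (√3 : ℝ) = 3 := by rw [← ofReal_mul, h3, ofReal_ofNat]
  have hc_sa : IsSelfAdjoint ((√3 : ℝ) : 𝕜) := conj_ofReal _
  have hX := ((hc_sa.smul hA₀).sub hB₀).sub ((IsSelfAdjoint.all 2).smul hB₁)
  have hY := ((hc_sa.smul hA₁).sub hB₀).add hB₁
  have hsos := congrArg (fun T => re ⟪ψ, T ψ⟫_𝕜)
    (smul_chsh_eq_sum_sq hA₀sq hA₁sq hB₀sq hB₁sq h₀₀ h₀₁ h₁₀ h₁₁ hc)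
  simp only [add_apply, sub_apply, smul_apply, one_apply_eq_self, inner_add_right,
    inner_sub_right, inner_smul_right, map_add, map_sub, ofNat_mul_re,
    hX.re_inner_mul_self_apply, hY.re_inner_mul_self_apply, mul_assoc, re_ofReal_mul,
    inner_self_eq_norm_sq, hψ, hcorr] at hsos
  have hscaled : √3 * re ⟪ψ, chsh A₀ A₁ B₀ B₁ ψ⟫_𝕜 ≤ √3 * (3 * √3 / 2) := by
    nlinarith [sq_nonneg ‖((√3 : ℝ) : 𝕜) • A₀ ψ - B₀ ψ - 2 • B₁ ψ‖,
      sq_nonneg ‖((√3 : ℝ) : 𝕜) • A₁ ψ - B₀ ψ + B₁ ψ‖]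
  exact le_of_mul_le_mul_left hscaled (by positivity)

end Operator

/-- `A_i ⊗ B_j` is modelled as the product `A_i * B_j` of commuting operators on the joint
Hilbert space. -/
theorem chsh_bound_of_zero_correlation
    {H : Type*} [NormedAddCommGroup H] [InnerProductSpace ℂ H] [CompleteSpace H]
    (A₀ A₁ B₀ B₁ : H →L[ℂ] H)
    (hA₀ : IsSelfAdjoint A₀) (hA₁ : IsSelfAdjoint A₁)
    (hB₀ : IsSelfAdjoint B₀) (hB₁ : IsSelfAdjoint B₁)
    (hA₀sq : A₀ * A₀ = 1) (hA₁sq : A₁ * A₁ = 1)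
    (hB₀sq : B₀ * B₀ = 1) (hB₁sq : B₁ * B₁ = 1)
    (hc₀₀ : Commute A₀ B₀) (hc₀₁ : Commute A₀ B₁)
    (hc₁₀ : Commute A₁ B₀) (hc₁₁ : Commute A₁ B₁)
    (ψ : H) (hψ : ‖ψ‖ = 1)
    (hcorr : ⟪ψ, (A₀ * B₀) ψ⟫_ℂ = 0) :
    ‖⟪ψ, (A₀ * B₀ + A₀ * B₁ + A₁ * B₀ - A₁ * B₁) ψ⟫_ℂ‖ ≤ 3 * Real.sqrt 3 / 2 := by
  have hcorr_re : re ⟪ψ, (A₀ * B₀) ψ⟫_ℂ = 0 := by rw [hcorr, map_zero]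
  have hupper := re_inner_chsh_le hA₀ hA₁ hB₀ hB₁ hA₀sq hA₁sq hB₀sq hB₁sq
    hc₀₀ hc₀₁ hc₁₀ hc₁₁ hψ hcorr_re
  have hlower := re_inner_chsh_le hA₀.neg hA₁.neg hB₀ hB₁ (by rwa [neg_mul_neg])
    (by rwa [neg_mul_neg]) hB₀sq hB₁sq hc₀₀.neg_left hc₀₁.neg_left hc₁₀.neg_left
    hc₁₁.neg_left hψ (by rw [neg_mul, neg_apply, inner_neg_right, map_neg, hcorr_re, neg_zero])
  rw [chsh_neg_left, neg_apply, inner_neg_right, map_neg] at hlower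
  have hreal : (re ⟪ψ, chsh A₀ A₁ B₀ B₁ ψ⟫_ℂ : ℂ) = ⟪ψ, chsh A₀ A₁ B₀ B₁ ψ⟫_ℂ :=
    (hA₀.chsh hA₁ hB₀ hB₁ hc₀₀ hc₀₁ hc₁₀ hc₁₁).isSymmetric.coe_re_inner_self_apply ψ
  change ‖⟪ψ, chsh A₀ A₁ B₀ B₁ ψ⟫_ℂ‖ ≤ _
  rw [← hreal, Complex.norm_real, Real.norm_eq_abs, abs_le]
  exact ⟨by linarith, hupper⟩
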